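/- arXiv:2102.10282 — 2 statements merged into one kernel-verified Lean document; each statement's English description precedes it below -/
import Mathlib

section
/- Let 𝒫 = {X_i : i ∈ I} be a partition of X and let Σ(X,𝒫) = {f ∈ T(X,𝒫) : f(X) ∩ X_i ≠ ∅ for all i ∈ I}. Then f ∈ Σ(X,𝒫) is regular in Σ(X,𝒫) (f = f g f for some g ∈ Σ(X,𝒫)) if and only if χ^(f) is regular in the monoid Γ(I) of surjective self-maps of I; equivalently (since regular elements of Γ(I) are bijections), if and only if χ^(f) is a permutation of I. -/
/-!
A map `f` preserving the partition induces its character `χf` on the index set, and the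
character of a composite is the composite of the characters. So `f = fgf` in `Σ(X,𝒫)` forces
`χf = χf χg χf` in `Γ(I)`. In `Γ(I)` this makes `χg` a right inverse of the surjection `χf`,
and a surjective right inverse forces `χf` to be a bijection. Conversely, when `χf` is a
bijection, a regular partner of `f` is obtained by sending each point of `f(X)` to one of its
preimages and each other point of `X_j` to an arbitrary point of `X_{χf⁻¹ j}`.
-/

/-- `B` is a partition of `X` into nonempty pairwise disjoint blocks. -/
def IsBlockPartition {X I : Type*} (B : I → Set X) : Prop :=
  (∀ i, (B i).Nonempty) ∧ (∀ i j, i ≠ j → Disjoint (B i) (B j)) ∧ ∀ x, ∃ i, x ∈ B i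

/-- `f` preserves the partition `B`: each block maps into some block. -/
def Preserves {X I : Type*} (B : I → Set X) (f : X → X) : Prop :=
  ∀ i, ∃ j, f '' B i ⊆ B j

/-- `f` is unit-regular in `T(X,𝒫)`: there is a unit `g` (a `𝒫`-preserving
bijection whose inverse preserves `𝒫`) with `fgf = f` (right-action
composition). -/
def URegP {X I : Type*} (B : I → Set X) (f : X → X) : Prop :=
  ∃ g : X ≃ X, Preserves B g ∧ Preserves B g.symm ∧ ∀ x, f (g (f x)) = f x

/-- The induced block map `f_i : X_i → X_j` has collapse equal to defect:
for some cross-section `T` of its kernel, `|X_i \ T| = |X_j \ f(X_i)|`. -/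
def BlockSemiBalanced {X I : Type*} (B : I → Set X) (f : X → X) (i j : I) : Prop :=
  ∃ T ⊆ B i, (∀ x ∈ B i, ∃! t, t ∈ T ∧ f t = f x) ∧
    Cardinal.mk ↥(B i \ T) = Cardinal.mk ↥(B j \ f '' B i)

open Function Set

theorem Function.Surjective.injective_of_comp_comp_eq {α : Type*} {a h : α → α}
    (ha : Surjective a) (hh : Surjective h) (H : ∀ i, a (h (a i)) = a i) : Injective a :=
  have hinv : LeftInverse a h := ha.forall.mpr H
  (hinv.rightInverse_of_surjective hh).injective

namespace IsBlockPartition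

variable {X I : Type*} {B : I → Set X}

theorem eq_of_mem (hP : IsBlockPartition B) {x : X} {i j : I} (hi : x ∈ B i) (hj : x ∈ B j) :
    i = j :=
  not_not.mp fun hij => (hP.2.1 i j hij).ne_of_mem hi hj rfl

noncomputable def blockOf (hP : IsBlockPartition B) (x : X) : I :=
  (hP.2.2 x).choose

theorem mem_blockOf (hP : IsBlockPartition B) (x : X) : x ∈ B (hP.blockOf x) :=
  (hP.2.2 x).choose_spec

theorem blockOf_eq (hP : IsBlockPartition B) {x : X} {i : I} (hx : x ∈ B i) :
    hP.blockOf x = i :=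
  hP.eq_of_mem (hP.mem_blockOf x) hx

theorem character_unique (hP : IsBlockPartition B) {f : X → X} {χ χ' : I → I}
    (hχ : ∀ i, f '' B i ⊆ B (χ i)) (hχ' : ∀ i, f '' B i ⊆ B (χ' i)) : χ = χ' := by
  funext i
  obtain ⟨x, hx⟩ := hP.1 i
  exact hP.eq_of_mem (hχ i ⟨x, hx, rfl⟩) (hχ' i ⟨x, hx, rfl⟩)

theorem character_surjective (hP : IsBlockPartition B) {f : X → X} {χ : I → I}
    (hχ : ∀ i, f '' B i ⊆ B (χ i)) (hf : ∀ i, (range f ∩ B i).Nonempty) : Surjective χ := by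
  intro i
  obtain ⟨_, ⟨x, rfl⟩, hxi⟩ := hf i
  exact ⟨hP.blockOf x, hP.eq_of_mem (hχ _ ⟨x, hP.mem_blockOf x, rfl⟩) hxi⟩

theorem character_regular_of_regular (hP : IsBlockPartition B) {f : X → X} {χf : I → I}
    (hχf : ∀ i, f '' B i ⊆ B (χf i))
    (hreg : ∃ g : X → X, Preserves B g ∧ (∀ i, (range g ∩ B i).Nonempty) ∧
      ∀ x, f (g (f x)) = f x) :
    ∃ h : I → I, Surjective h ∧ ∀ i, χf (h (χf i)) = χf i := by
  obtain ⟨g, hgP, hgSig, hfgf⟩ := hreg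
  choose χg hχg using hgP
  have hcomp : ∀ i, (f ∘ g ∘ f) '' B i ⊆ B (χf (χg (χf i))) := fun i => by
    simp only [image_comp]
    exact (image_mono ((image_mono (hχf i)).trans (hχg _))).trans (hχf _)
  have hfgf' : f ∘ g ∘ f = f := funext hfgf
  rw [hfgf'] at hcomp
  exact ⟨χg, hP.character_surjective hχg hgSig,
    congrFun (hP.character_unique hcomp hχf)⟩

open Classical in
noncomputable def regularPartner (hP : IsBlockPartition B) (f : X → X) (e : I ≃ I) (y : X) :
    X :=
  if hy : y ∈ range f then hy.choose else (hP.1 (e.symm (hP.blockOf y))).some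

theorem apply_regularPartner_of_mem_range (hP : IsBlockPartition B) {f : X → X} (e : I ≃ I)
    {y : X} (hy : y ∈ range f) : f (hP.regularPartner f e y) = y := by
  rw [regularPartner, dif_pos hy]
  exact hy.choose_spec

theorem regularPartner_mem (hP : IsBlockPartition B) {f : X → X} {e : I ≃ I}
    (he : ∀ i, f '' B i ⊆ B (e i)) (y : X) :
    hP.regularPartner f e y ∈ B (e.symm (hP.blockOf y)) := by
  by_cases hy : y ∈ range f
  · set x := hP.regularPartner f e y
    have hfx : f x ∈ B (e (hP.blockOf x)) := he _ ⟨x, hP.mem_blockOf x, rfl⟩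
    rw [hP.apply_regularPartner_of_mem_range e hy] at hfx
    rw [hP.blockOf_eq hfx, e.symm_apply_apply]
    exact hP.mem_blockOf x
  · rw [regularPartner, dif_neg hy]
    exact Nonempty.some_mem _

theorem exists_regular_of_bijective (hP : IsBlockPartition B) {f : X → X} {χf : I → I}
    (hχf : ∀ i, f '' B i ⊆ B (χf i)) (hbij : Bijective χf) :
    ∃ g : X → X, Preserves B g ∧ (∀ i, (range g ∩ B i).Nonempty) ∧
      ∀ x, f (g (f x)) = f x := by
  set e := Equiv.ofBijective χf hbij
  have hmaps : ∀ j, hP.regularPartner f e '' B j ⊆ B (e.symm j) := by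
    rintro j _ ⟨y, hy, rfl⟩
    simpa only [hP.blockOf_eq hy] using hP.regularPartner_mem hχf y
  refine ⟨hP.regularPartner f e, fun j => ⟨_, hmaps j⟩, fun i => ?_,
    fun x => hP.apply_regularPartner_of_mem_range e ⟨x, rfl⟩⟩
  obtain ⟨y, hy⟩ := hP.1 (e i)
  exact ⟨_, mem_range_self y, by simpa only [e.symm_apply_apply] using hmaps (e i) ⟨y, hy, rfl⟩⟩

end IsBlockPartition

/-- `f ∈ Σ(X,𝒫)` is regular in `Σ(X,𝒫)` iff its character `χf` is regular
in the monoid `Γ(I)` of surjective self-maps of `I`, iff `χf` is a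
permutation of `I`. -/
theorem stmt_14 {X I : Type*} (B : I → Set X) (hP : IsBlockPartition B)
    (f : X → X) (χf : I → I) (hχf : ∀ i, f '' B i ⊆ B (χf i))
    (hSig : ∀ i, (Set.range f ∩ B i).Nonempty) :
    ((∃ g : X → X, Preserves B g ∧ (∀ i, (Set.range g ∩ B i).Nonempty) ∧
          ∀ x, f (g (f x)) = f x) ↔
        ∃ h : I → I, Function.Surjective h ∧ ∀ i, χf (h (χf i)) = χf i) ∧
      ((∃ g : X → X, Preserves B g ∧ (∀ i, (Set.range g ∩ B i).Nonempty) ∧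
            ∀ x, f (g (f x)) = f x) ↔
          Function.Bijective χf) := by
  have toGamma := hP.character_regular_of_regular hχf
  have ofBijective := hP.exists_regular_of_bijective hχf
  have hsurj := hP.character_surjective hχf hSig
  have toBijective : (∃ h : I → I, Surjective h ∧ ∀ i, χf (h (χf i)) = χf i) →
      Bijective χf := fun ⟨_, hh, H⟩ => ⟨hsurj.injective_of_comp_comp_eq hh H, hsurj⟩
  exact ⟨⟨toGamma, ofBijective ∘ toBijective⟩, ⟨toBijective ∘ toGamma, ofBijective⟩⟩
end

section
/- Let 𝒫 = {X_i : i ∈ I} be a partition of X and Ω(X,𝒫) = {f ∈ T(X,𝒫) : f is injective on each block, i.e., x ≠ y and (x,y) ∈ E implies f(x) ≠ f(y)}. Then f ∈ Ω(X,𝒫) is regular in Ω(X,𝒫) (f = f g f for some g ∈ Ω(X,𝒫)) if and only if for every j in the image of χ^(f) there exists i ∈ I with χ^(f)(i) = j such that the induced block map f_i : X_i → X_j is surjective. -/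
/-!
A regular inverse `g ∈ Ω(X,𝒫)` of `f` sends the block `X_j`, `j = χf i₀`, into some block
`X_i`, and evaluating `fgf = f` on `X_{i₀}` forces `χf i = j`. Then `f ∘ g` is an idempotent
self-map of `X_j` that is injective, hence the identity, so `f_i` is onto `X_j`. Conversely,
inverting a surjective block map `f_i : X_i → X_j` on each such `X_j`, and taking the identity
on the other blocks, glues to a regular inverse in `Ω(X,𝒫)`.
-/

open Set Function

noncomputable def IsBlockPartition.toIndexedPartition {X I : Type*} {B : I → Set X}
    (hP : IsBlockPartition B) : IndexedPartition B :=
  IndexedPartition.mk' B (fun i j => hP.2.1 i j) hP.1 hP.2.2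

section BlockInverse

variable {X I : Type*} [Nonempty X] {B : I → Set X} {f : X → X}

open Classical in
noncomputable def blockInverse (B : I → Set X) (f : X → X) (j : I) : X → X :=
  if h : ∃ i, f '' B i = B j then invFunOn f (B h.choose) else id

theorem mapsTo_blockInverse (j : I) : ∃ k, MapsTo (blockInverse B f j) (B j) (B k) := by
  unfold blockInverse
  split_ifs with h
  · refine ⟨h.choose, fun y hy => invFunOn_mem ?_⟩
    rwa [← h.choose_spec] at hy
  · exact ⟨j, mapsTo_id _⟩

theorem injOn_blockInverse (j : I) : InjOn (blockInverse B f j) (B j) := by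
  unfold blockInverse
  split_ifs with h
  · have := invFunOn_injOn_image f (B h.choose)
    rwa [h.choose_spec] at this
  · exact injOn_id _

theorem apply_blockInverse {j : I} (h : ∃ i, f '' B i = B j) {y : X} (hy : y ∈ B j) :
    f (blockInverse B f j y) = y := by
  rw [blockInverse, dif_pos h]
  refine invFunOn_eq ?_
  rwa [← h.choose_spec] at hy

end BlockInverse

namespace IndexedPartition

variable {X I : Type*} {B : I → Set X} {f : X → X}

theorem eqOn_piecewise (hs : IndexedPartition B) {β : Type*} (h : I → X → β) (i : I) :
    EqOn (hs.piecewise h) (h i) (B i) := fun x hx => by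
  rw [piecewise_apply, hs.mem_iff_index_eq.mp hx]

theorem preserves_piecewise (hs : IndexedPartition B) {h : I → X → X}
    (hh : ∀ i, ∃ j, MapsTo (h i) (B i) (B j)) :
    Preserves B (hs.piecewise h) := fun i => by
  obtain ⟨j, hj⟩ := hh i
  exact ⟨j, ((hs.eqOn_piecewise h i).mapsTo_iff.2 hj).image_subset⟩

theorem injOn_piecewise (hs : IndexedPartition B) {h : I → X → X}
    (hh : ∀ i, InjOn (h i) (B i)) (i : I) :
    InjOn (hs.piecewise h) (B i) :=
  (hs.eqOn_piecewise h i).injOn_iff.2 (hh i)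

theorem exists_image_eq_of_regular (hs : IndexedPartition B) {χf : I → I}
    (hχf : ∀ i, f '' B i ⊆ B (χf i)) (hinj : ∀ i, InjOn f (B i)) {g : X → X}
    (hg : Preserves B g) (hginj : ∀ i, InjOn g (B i)) (hfgf : ∀ x, f (g (f x)) = f x)
    (i₀ : I) :
    ∃ i, χf i = χf i₀ ∧ f '' B i = B (χf i₀) := by
  have hf : ∀ k, MapsTo f (B k) (B (χf k)) := fun k => mapsTo_iff_image_subset.2 (hχf k)
  obtain ⟨i, hgi⟩ := hg (χf i₀)
  have hgB : MapsTo g (B (χf i₀)) (B i) := mapsTo_iff_image_subset.2 hgi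
  have hfy := hf i₀ (hs.some_mem i₀)
  have hχ : χf i = χf i₀ := hs.eq_of_mem (hf i (hgB hfy)) ((hfgf _).symm ▸ hfy)
  refine ⟨i, hχ, (hχ ▸ hχf i).antisymm fun x hx => ⟨g x, hgB hx, ?_⟩⟩
  -- `f ∘ g` is an injective idempotent self-map of `B (χf i₀)`, hence the identity there
  have hfg : MapsTo (f ∘ g) (B (χf i₀)) (B (χf i₀)) := fun y hy => hχ ▸ hf i (hgB hy)
  exact (hinj i).comp (hginj _) hgB (hfg hx) hx (hfgf (g x))

theorem exists_regular_inverse [Nonempty X] (hs : IndexedPartition B) {χf : I → I}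
    (hχf : ∀ i, f '' B i ⊆ B (χf i))
    (hsurj : ∀ j ∈ range χf, ∃ i, f '' B i = B j) :
    ∃ g : X → X, Preserves B g ∧ (∀ i, InjOn g (B i)) ∧ ∀ x, f (g (f x)) = f x := by
  refine ⟨hs.piecewise (blockInverse B f), hs.preserves_piecewise mapsTo_blockInverse,
    hs.injOn_piecewise injOn_blockInverse, fun x => ?_⟩
  have hfx : f x ∈ B (χf (hs.index x)) := hχf _ (mem_image_of_mem f (hs.mem_index x))
  rw [hs.eqOn_piecewise _ _ hfx]
  exact apply_blockInverse (hsurj _ (mem_range_self _)) hfx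

end IndexedPartition

/-- `f ∈ Ω(X,𝒫)` (preserving 𝒫 and injective on each block) is regular in
`Ω(X,𝒫)` iff for every `j` in the image of `χf` there is `i` with
`χf i = j` whose induced block map `f_i : X_i → X_j` is surjective. -/
theorem stmt_18 {X I : Type*} (B : I → Set X) (hP : IsBlockPartition B)
    (f : X → X) (χf : I → I) (hχf : ∀ i, f '' B i ⊆ B (χf i))
    (hinj : ∀ i, Set.InjOn f (B i)) :
    (∃ g : X → X, Preserves B g ∧ (∀ i, Set.InjOn g (B i)) ∧
        ∀ x, f (g (f x)) = f x) ↔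
      ∀ j ∈ Set.range χf, ∃ i, χf i = j ∧ f '' B i = B j := by
  have hs := hP.toIndexedPartition
  constructor
  · rintro ⟨g, hg, hginj, hfgf⟩ j ⟨i₀, rfl⟩
    exact hs.exists_image_eq_of_regular hχf hinj hg hginj hfgf i₀
  · intro hsurj
    rcases isEmpty_or_nonempty X with hX | hX
    · exact ⟨id, fun i => ⟨i, (image_id _).subset⟩, fun _ => injOn_id _, isEmptyElim⟩
    exact hs.exists_regular_inverse hχf fun j hj => (hsurj j hj).imp fun _ => And.right
end
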